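/- arXiv:2412.04389 — 4 statements merged into one kernel-verified Lean document; each statement's English description precedes it below -/
import Mathlib

section
/- If M = (v_1h_1, \ldots, v_mh_m) is a C-matching in IG(H), then its retrograde (h_mv_m, h_{m-1}v_{m-1}, \ldots, h_1v_1) is a C-matching in IG(H^*), where H^* is the dual hypergraph of H. -/
open scoped Classical

section Defs

variable {V E : Type*}

/-- The set of vertices eventually burned when `B` is initially burned:
a vertex burns if it is initially burned, or if some hyperedge contains it and
all other vertices of that hyperedge are burned. -/
inductive Burns (edges : E → Finset V) (B : Set V) : V → Prop
  | init (v : V) : v ∈ B → Burns edges B v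
  | spread (h : E) (v : V) : v ∈ edges h →
      (∀ u, u ∈ edges h → u ≠ v → Burns edges B u) → Burns edges B v

/-- `B` is a lazy burning set if every vertex eventually burns. -/
def IsLazyBurningSet (edges : E → Finset V) (B : Set V) : Prop :=
  ∀ v, Burns edges B v

/-- The lazy burning number: minimum size of a lazy burning set. -/
noncomputable def lazyBurningNumber [Fintype V] (edges : E → Finset V) : ℕ :=
  sInf {n | ∃ B : Finset V, B.card = n ∧ IsLazyBurningSet edges ↑B}

/-- A `C`-matching in the incidence graph: a list of incidence pairs `(vᵢ, hᵢ)`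
with the `vᵢ` distinct, such that `hᵢ` contains none of the later vertices. -/
def IsCMatching (edges : E → Finset V) (L : List (V × E)) : Prop :=
  (∀ p ∈ L, p.1 ∈ edges p.2) ∧ (L.map Prod.fst).Nodup ∧
  ∀ i j (hi : i < L.length) (hj : j < L.length), i < j →
    (L.get ⟨j, hj⟩).1 ∉ edges (L.get ⟨i, hi⟩).2

/-- `m(H)`: maximum cardinality (length) of a `C`-matching. -/
noncomputable def maxCMatching (edges : E → Finset V) : ℕ :=
  sSup {k | ∃ L : List (V × E), IsCMatching edges L ∧ L.length = k}

/-- A chronological list of lazy burnings starting from `B0`: a list of pairs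
`(hᵢ, vᵢ)` with `vᵢ ∈ hᵢ` and `hᵢ \ {vᵢ} ⊆ B_{i-1} = B0 ∪ {v₁, …, v_{i-1}}`. -/
def IsChronList (edges : E → Finset V) (B0 : Set V) (L : List (E × V)) : Prop :=
  ∀ i (hi : i < L.length),
    (L.get ⟨i, hi⟩).2 ∈ edges (L.get ⟨i, hi⟩).1 ∧
    ∀ u, u ∈ edges (L.get ⟨i, hi⟩).1 → u ≠ (L.get ⟨i, hi⟩).2 →
      u ∈ B0 ∨ ∃ j, ∃ hj : j < L.length, j < i ∧ u = (L.get ⟨j, hj⟩).2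

/-- The dual hypergraph: vertices are the hyperedges of `H`, and for each vertex
`v` of `H` there is a hyperedge `N(v) = {h : v ∈ h}`. -/
noncomputable def dualEdges [Fintype E] (edges : E → Finset V) (v : V) : Finset E :=
  Finset.univ.filter (fun h => v ∈ edges h)

/-- `U` induces a subhypergraph all of whose hyperedges have cardinality `> 1`. -/
def GoodSet (edges : E → Finset V) (U : Finset V) : Prop :=
  ∀ h : E, ((edges h) ∩ U).Nonempty → 1 < ((edges h) ∩ U).card

/-- The vertex set of the core of `H`: the maximum induced subhypergraph all of
whose hyperedges have cardinality `> 1`. -/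
noncomputable def coreSet [Fintype V] (edges : E → Finset V) : Finset V :=
  (Finset.univ : Finset V).powerset.sup (fun U => if GoodSet edges U then U else ∅)

/-- The zero forcing closure: a black vertex `u` with unique white neighbor `v`
forces `v`. -/
inductive ZFClosure {α : Type*} (G : SimpleGraph α) (B : Set α) : α → Prop
  | init (v : α) : v ∈ B → ZFClosure G B v
  | force (u v : α) : ZFClosure G B u → G.Adj u v →
      (∀ w, G.Adj u w → w ≠ v → ZFClosure G B w) → ZFClosure G B v

def IsZeroForcingSet {α : Type*} (G : SimpleGraph α) (B : Set α) : Prop :=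
  ∀ v, ZFClosure G B v

noncomputable def zeroForcingNumber {α : Type*} [Fintype α] (G : SimpleGraph α) : ℕ :=
  sInf {n | ∃ B : Finset α, B.card = n ∧ IsZeroForcingSet G ↑B}

/-- The skew zero forcing closure: any vertex `u` (black or white) with a unique
white neighbor `v` forces `v`. -/
inductive SkewZFClosure {α : Type*} (G : SimpleGraph α) (B : Set α) : α → Prop
  | init (v : α) : v ∈ B → SkewZFClosure G B v
  | force (u v : α) : G.Adj u v →
      (∀ w, G.Adj u w → w ≠ v → SkewZFClosure G B w) → SkewZFClosure G B v

def IsSkewZeroForcingSet {α : Type*} (G : SimpleGraph α) (B : Set α) : Prop :=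
  ∀ v, SkewZFClosure G B v

noncomputable def skewZeroForcingNumber {α : Type*} [Fintype α] (G : SimpleGraph α) : ℕ :=
  sInf {n | ∃ B : Finset α, B.card = n ∧ IsSkewZeroForcingSet G ↑B}

/-- The incidence (Levi) graph of a hypergraph. -/
def incidenceGraph (edges : E → Finset V) : SimpleGraph (V ⊕ E) where
  Adj x y := (∃ v h, x = Sum.inl v ∧ y = Sum.inr h ∧ v ∈ edges h) ∨
             (∃ v h, x = Sum.inr h ∧ y = Sum.inl v ∧ v ∈ edges h)
  symm := by
    refine ⟨?_⟩
    rintro x y (⟨v, h, rfl, rfl, hm⟩ | ⟨v, h, rfl, rfl, hm⟩)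
    · exact Or.inr ⟨v, h, rfl, rfl, hm⟩
    · exact Or.inl ⟨v, h, rfl, rfl, hm⟩
  loopless := by
    refine ⟨?_⟩
    rintro x (⟨v, h, h1, h2, _⟩ | ⟨v, h, h1, h2, _⟩) <;> subst h1 <;> simp_all

/-- The star `K_{1,j}` with center `0`. -/
def starGraph (j : ℕ) : SimpleGraph (Fin (j + 1)) where
  Adj a b := a ≠ b ∧ (a = 0 ∨ b = 0)
  symm := ⟨fun _ _ ⟨hne, hor⟩ => ⟨hne.symm, hor.symm⟩⟩
  loopless := ⟨fun _ ha => ha.1 rfl⟩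

end Defs

/-! Both C-matching conditions are `List.Pairwise` conditions, and reversing the list swaps the
order of each pair, so `vⱼ ∉ hᵢ` for `i < j` becomes `hᵢ ∉ N(vⱼ)` with `hᵢ` now coming later.
The dual list also needs distinct edges `hᵢ`: `hᵢ = hⱼ` with `i < j` would give `vⱼ ∈ hᵢ`. -/

section CMatching

variable {V E : Type*}

theorem isCMatching_iff_pairwise (edges : E → Finset V) (L : List (V × E)) :
    IsCMatching edges L ↔ (∀ p ∈ L, p.1 ∈ edges p.2) ∧ (L.map Prod.fst).Nodup ∧
      L.Pairwise (fun p q => q.1 ∉ edges p.2) := by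
  simp only [IsCMatching, List.pairwise_iff_getElem, List.get_eq_getElem]

theorem IsCMatching.nodup_snd {edges : E → Finset V} {L : List (V × E)}
    (hL : IsCMatching edges L) : (L.map Prod.snd).Nodup := by
  obtain ⟨hmem, -, hlater⟩ := (isCMatching_iff_pairwise edges L).mp hL
  refine List.pairwise_map.mpr (hlater.imp_of_mem fun _ hq hnot heq => ?_)
  exact hnot (heq ▸ hmem _ hq)

@[simp]
theorem mem_dualEdges [Fintype E] {edges : E → Finset V} {v : V} {h : E} :
    h ∈ dualEdges edges v ↔ v ∈ edges h := by
  simp [dualEdges]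

end CMatching

theorem stmt3 {V E : Type*} [Fintype E] (edges : E → Finset V) (L : List (V × E))
    (hL : IsCMatching edges L) :
    IsCMatching (dualEdges edges) (L.reverse.map Prod.swap) := by
  have hsnd := hL.nodup_snd
  obtain ⟨hmem, -, hlater⟩ := (isCMatching_iff_pairwise edges L).mp hL
  refine (isCMatching_iff_pairwise _ _).mpr ⟨?_, ?_, ?_⟩
  · simp only [List.forall_mem_map, List.mem_reverse, Prod.fst_swap, Prod.snd_swap,
      mem_dualEdges]
    exact hmem
  · simpa [List.map_reverse, Function.comp_def] using hsnd
  · simpa [List.pairwise_map, List.pairwise_reverse] using hlater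
end

section
/- Let H be a hypergraph in which any two distinct hyperedges intersect in at most \overline{\lambda} vertices, and let \overline{D}_t be the minimum possible sum of the cardinalities of t distinct hyperedges of H. Then for every t with 1 \le t \le m(H), b_L(H) \ge \overline{D}_t - \overline{\lambda}\binom{t}{2} - t. -/
open scoped Classical

/-
An optimal lazy burning set `B` leaves room for `t ≤ m(H) = |V| - b_L(H)` further rounds of burning.
Each round burns a new vertex `u` through a hyperedge all of whose other vertices are already
burned, and this hyperedge is new since it contains `u`. The `t` hyperedges so obtained are
distinct and lie inside a set of at most `b_L(H) + t` vertices, while by inclusion–exclusion their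
union has at least `D̄_t - λ̄ (t choose 2)` vertices.
-/

section LazyBurning

variable {V E : Type*} {edges : E → Finset V}

theorem Burns.mono {B B' : Set V} (hBB' : B ⊆ B') {v : V} (hv : Burns edges B v) :
    Burns edges B' v := by
  induction hv with
  | init v hv => exact .init v (hBB' hv)
  | spread h v hv _ ih => exact .spread h v hv ih

theorem IsLazyBurningSet.mono {B B' : Set V} (hB : IsLazyBurningSet edges B) (hBB' : B ⊆ B') :
    IsLazyBurningSet edges B' :=
  fun v => (hB v).mono hBB'

theorem Burns.mem_or_exists_forced {B : Set V} {v : V} (hv : Burns edges B v) :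
    v ∈ B ∨ ∃ e u, u ∉ B ∧ u ∈ edges e ∧ ∀ w ∈ edges e, w ≠ u → w ∈ B := by
  induction hv with
  | init v hv => exact .inl hv
  | spread h v hv _ ih =>
    by_cases hvB : v ∈ B
    · exact .inl hvB
    by_cases hforced : ∀ u ∈ edges h, u ≠ v → u ∈ B
    · exact .inr ⟨h, v, hvB, hv, hforced⟩
    push Not at hforced
    obtain ⟨u, hu, huv, huB⟩ := hforced
    exact .inr ((ih u hu huv).resolve_left huB)

theorem IsLazyBurningSet.exists_edge_subset_insert {W : Finset V}
    (hW : IsLazyBurningSet edges ↑W) {v : V} (hv : v ∉ W) :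
    ∃ e u, u ∉ W ∧ u ∈ edges e ∧ edges e ⊆ insert u W := by
  obtain hvW | ⟨e, u, huW, hue, hforced⟩ := (hW v).mem_or_exists_forced
  · exact absurd hvW hv
  refine ⟨e, u, huW, hue, fun w hw => ?_⟩
  by_cases hwu : w = u
  · exact hwu ▸ Finset.mem_insert_self u W
  · exact Finset.mem_insert_of_mem (hforced w hw hwu)

/-- Each further round of burning from `B` burns one new vertex through a hyperedge not used
before, which lies inside `B` and the vertices burned so far. -/
theorem IsLazyBurningSet.exists_card_union_biUnion_le [Fintype V] {B : Finset V}
    (hB : IsLazyBurningSet edges ↑B) {t : ℕ} (ht : B.card + t ≤ Fintype.card V) :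
    ∃ S : Finset E, S.card = t ∧ (B ∪ S.biUnion edges).card ≤ B.card + t := by
  induction t with
  | zero => exact ⟨∅, by simp⟩
  | succ n ih =>
    obtain ⟨S, hScard, hW⟩ := ih (by omega)
    set W := B ∪ S.biUnion edges
    have hWlt : W.card < (Finset.univ : Finset V).card := by rw [Finset.card_univ]; omega
    obtain ⟨v, -, hv⟩ := Finset.exists_mem_notMem_of_card_lt_card hWlt
    have hWburn : IsLazyBurningSet edges ↑W := hB.mono (by simp [W])
    obtain ⟨e, u, huW, hue, he⟩ := hWburn.exists_edge_subset_insert hv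
    have heS : e ∉ S := fun heS =>
      huW (Finset.mem_union_right _ (Finset.mem_biUnion.2 ⟨e, heS, hue⟩))
    refine ⟨insert e S, by rw [Finset.card_insert_of_notMem heS, hScard], ?_⟩
    have hsub : B ∪ (insert e S).biUnion edges ⊆ insert u W := by
      rw [Finset.biUnion_insert]
      intro x hx
      simp only [Finset.mem_union] at hx
      rcases hx with hx | hx | hx
      · exact Finset.mem_insert_of_mem (Finset.mem_union_left _ hx)
      · exact he hx
      · exact Finset.mem_insert_of_mem (Finset.mem_union_right _ hx)
    calc (B ∪ (insert e S).biUnion edges).card ≤ (insert u W).card := Finset.card_le_card hsub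
      _ ≤ W.card + 1 := Finset.card_insert_le u W
      _ ≤ B.card + (n + 1) := by omega

theorem IsCMatching.nil : IsCMatching edges [] :=
  ⟨by simp, by simp, fun _ _ hi => absurd hi (Nat.not_lt_zero _)⟩

theorem IsCMatching.length_le_card [Fintype V] {L : List (V × E)} (hL : IsCMatching edges L) :
    L.length ≤ Fintype.card V := by
  simpa using hL.2.1.length_le_card

theorem exists_isCMatching_length_eq_maxCMatching [Fintype V] :
    ∃ L : List (V × E), IsCMatching edges L ∧ L.length = maxCMatching edges :=
  Nat.sSup_mem (s := {k | ∃ L : List (V × E), IsCMatching edges L ∧ L.length = k})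
    ⟨0, [], IsCMatching.nil, rfl⟩
    ⟨Fintype.card V, fun _ ⟨_, hL, hlen⟩ => hlen ▸ hL.length_le_card⟩

/-- Burning the matched vertices in order: the hyperedge matched to `vⱼ` contains no later
matched vertex, so all its other vertices are unmatched or matched earlier. -/
theorem IsCMatching.isLazyBurningSet {L : List (V × E)} (hL : IsCMatching edges L) :
    IsLazyBurningSet edges {v | v ∉ L.map Prod.fst} := by
  have hmatched : ∀ j (hj : j < L.length), Burns edges {v | v ∉ L.map Prod.fst} L[j].1 := by
    intro j
    induction j using Nat.strong_induction_on with
    | _ j ih =>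
      intro hj
      refine .spread L[j].2 L[j].1 (hL.1 _ (List.getElem_mem hj)) fun u hu huj => ?_
      by_cases hum : u ∈ L.map Prod.fst
      · obtain ⟨i, hi, rfl⟩ := List.getElem_of_mem hum
        simp only [List.length_map, List.getElem_map] at hi huj hu ⊢
        have hij : i < j := by
          rcases lt_trichotomy i j with hij | rfl | hji
          · exact hij
          · exact absurd rfl huj
          · simpa using hL.2.2 j i hj hi hji hu
        exact ih i hij hi
      · exact .init u hum
  intro v
  by_cases hv : v ∈ L.map Prod.fst
  · obtain ⟨j, hj, rfl⟩ := List.getElem_of_mem hv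
    simpa using hmatched j (by simpa using hj)
  · exact .init v hv

theorem lazyBurningNumber_add_length_le [Fintype V] {L : List (V × E)}
    (hL : IsCMatching edges L) : lazyBurningNumber edges + L.length ≤ Fintype.card V := by
  set M := (L.map Prod.fst).toFinset
  have hMcard : M.card = L.length := by simp [M, List.toFinset_card_of_nodup hL.2.1]
  have hle : lazyBurningNumber edges ≤ (Finset.univ \ M).card :=
    Nat.sInf_le ⟨_, rfl, hL.isLazyBurningSet.mono fun v hv => by simpa [M] using hv⟩
  have := hL.length_le_card
  rw [Finset.card_sdiff_of_subset (Finset.subset_univ M), Finset.card_univ, hMcard] at hle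
  omega

theorem lazyBurningNumber_add_maxCMatching_le [Fintype V] :
    lazyBurningNumber edges + maxCMatching edges ≤ Fintype.card V := by
  obtain ⟨L, hL, hlen⟩ := exists_isCMatching_length_eq_maxCMatching (edges := edges)
  exact hlen ▸ lazyBurningNumber_add_length_le hL

theorem exists_isLazyBurningSet_card_eq_lazyBurningNumber [Fintype V] :
    ∃ B : Finset V, B.card = lazyBurningNumber edges ∧ IsLazyBurningSet edges ↑B :=
  Nat.sInf_mem (s := {n | ∃ B : Finset V, B.card = n ∧ IsLazyBurningSet edges ↑B})
    ⟨_, Finset.univ, rfl, fun v => .init v (Finset.mem_coe.2 (Finset.mem_univ v))⟩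

theorem Finset.sum_card_le_card_biUnion_add {ι α : Type*} [DecidableEq ι] [DecidableEq α]
    (f : ι → Finset α) (lam : ℕ) (S : Finset ι)
    (hf : ∀ i ∈ S, ∀ j ∈ S, i ≠ j → (f i ∩ f j).card ≤ lam) :
    ∑ i ∈ S, (f i).card ≤ (S.biUnion f).card + lam * S.card.choose 2 := by
  induction S using Finset.induction_on with
  | empty => simp
  | @insert a s ha ih =>
    have hf' : ∀ i ∈ s, ∀ j ∈ s, i ≠ j → (f i ∩ f j).card ≤ lam := fun i hi j hj =>
      hf i (mem_insert_of_mem hi) j (mem_insert_of_mem hj)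
    have hinter : (f a ∩ s.biUnion f).card ≤ lam * s.card := by
      rw [inter_biUnion]
      calc (s.biUnion fun i => f a ∩ f i).card ≤ ∑ i ∈ s, (f a ∩ f i).card := card_biUnion_le
        _ ≤ ∑ _i ∈ s, lam := sum_le_sum fun i hi =>
            hf a (mem_insert_self a s) i (mem_insert_of_mem hi) (ne_of_mem_of_not_mem hi ha).symm
        _ = lam * s.card := by rw [sum_const, smul_eq_mul, mul_comm]
    have hunion := card_union_add_card_inter (f a) (s.biUnion f)
    rw [sum_insert ha, biUnion_insert, card_insert_of_notMem ha, Nat.choose_succ_succ',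
      Nat.choose_one_right, Nat.mul_add]
    linarith [ih hf']

end LazyBurning

theorem stmt6_general {V E : Type*} [Fintype V] (edges : E → Finset V) (lam : ℕ)
    (hlam : ∀ h h' : E, h ≠ h' → ((edges h) ∩ (edges h')).card ≤ lam)
    (t : ℕ) (ht2 : t ≤ maxCMatching edges)
    (Dbar : ℕ)
    (hD : IsLeast {s | ∃ S : Finset E, S.card = t ∧ s = ∑ h ∈ S, (edges h).card} Dbar) :
    (Dbar : ℤ) - lam * t.choose 2 - t ≤ lazyBurningNumber edges := by
  obtain ⟨B, hBcard, hB⟩ := exists_isLazyBurningSet_card_eq_lazyBurningNumber (edges := edges)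
  have hroom : B.card + t ≤ Fintype.card V := by
    have := lazyBurningNumber_add_maxCMatching_le (edges := edges)
    omega
  obtain ⟨S, hScard, hSB⟩ := hB.exists_card_union_biUnion_le hroom
  have hDS : Dbar ≤ ∑ h ∈ S, (edges h).card := hD.2 ⟨S, hScard, rfl⟩
  have hsum := Finset.sum_card_le_card_biUnion_add edges lam S fun h _ h' _ => hlam h h'
  have hbiUnion : (S.biUnion edges).card ≤ (B ∪ S.biUnion edges).card :=
    Finset.card_le_card Finset.subset_union_right
  rw [hScard] at hsum
  have hDbar : Dbar ≤ lazyBurningNumber edges + t + lam * t.choose 2 := by omega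
  zify at hDbar
  linarith

theorem stmt6 {V E : Type*} [Fintype V] (edges : E → Finset V) (lam : ℕ)
    (hinj : Function.Injective edges)
    (hlam : ∀ h h' : E, h ≠ h' → ((edges h) ∩ (edges h')).card ≤ lam)
    (t : ℕ) (ht1 : 1 ≤ t) (ht2 : t ≤ maxCMatching edges)
    (Dbar : ℕ)
    (hD : IsLeast {s | ∃ S : Finset E, S.card = t ∧ s = ∑ h ∈ S, (edges h).card} Dbar) :
    (Dbar : ℤ) - lam * t.choose 2 - t ≤ lazyBurningNumber edges :=
  stmt6_general edges lam hlam t ht2 Dbar hD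
end

section
/- If H is a linear hypergraph (any two distinct hyperedges share at most one vertex) in which every hyperedge has cardinality at least r and which has at least r hyperedges, then b_L(H) \ge \binom{r}{2}. -/
open scoped Classical

/-!
Let `B` be a lazy burning set and let `F` be a set of hyperedges that is not all of `E`. Since
every vertex outside `B ∪ ⋃ F` eventually burns, the first one to do so is the last unburned
vertex of a hyperedge, so some hyperedge `h ∉ F` has at most one vertex outside `B ∪ ⋃ F`.
Picking hyperedges `h₀, h₁, …` greedily in this way, linearity says `hₜ` meets the earlier
ones in at most `t` vertices, so `hₜ` contributes at least `r - 1 - t` new vertices of `B`.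
Summing over `t < r` gives `|B| ≥ (r - 1) + (r - 2) + ⋯ + 0 = r.choose 2`.
-/

section LazyBurning

variable {V E : Type*}

theorem Burns.exists_edge_sdiff_eq_singleton {edges : E → Finset V} {B : Set V} {U : Finset V}
    (hBU : B ⊆ U) {v : V} (hv : Burns edges B v) (hvU : v ∉ U) :
    ∃ h w, edges h \ U = {w} := by
  induction hv with
  | init v hvB => exact absurd (hBU hvB) hvU
  | spread h v hvh _ ih =>
    by_cases hrest : ∀ u ∈ edges h, u ≠ v → u ∈ U
    · refine ⟨h, v, Finset.eq_singleton_iff_unique_mem.2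
        ⟨Finset.mem_sdiff.2 ⟨hvh, hvU⟩, ?_⟩⟩
      intro u hu
      rw [Finset.mem_sdiff] at hu
      by_contra huv
      exact hu.2 (hrest u hu.1 huv)
    · push Not at hrest
      obtain ⟨u, hu, huv, huU⟩ := hrest
      exact ih u hu huv huU

theorem IsLazyBurningSet.exists_edge_card_sdiff_le_one [Fintype E] {edges : E → Finset V}
    {B : Finset V} (hB : IsLazyBurningSet edges ↑B) {F : Finset E}
    (hF : F.card < Fintype.card E) :
    ∃ h ∉ F, (edges h \ (B ∪ F.biUnion edges)).card ≤ 1 := by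
  set U := B ∪ F.biUnion edges
  by_cases hcover : ∀ v, v ∈ U
  · obtain ⟨h, -, hhF⟩ := Finset.exists_mem_notMem_of_card_lt_card (s := F)
      (t := Finset.univ) (by rwa [Finset.card_univ])
    refine ⟨h, hhF, ?_⟩
    rw [Finset.sdiff_eq_empty_iff_subset.2 fun v _ => hcover v, Finset.card_empty]
    exact zero_le_one
  · push Not at hcover
    obtain ⟨v, hvU⟩ := hcover
    obtain ⟨h, w, hw⟩ := Burns.exists_edge_sdiff_eq_singleton
      (fun x hx => Finset.mem_union_left _ (Finset.mem_coe.1 hx)) (hB v) hvU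
    refine ⟨h, fun hhF => ?_, by rw [hw, Finset.card_singleton]⟩
    have hsub : edges h ⊆ U := fun x hx =>
      Finset.mem_union_right _ (Finset.mem_biUnion.2 ⟨h, hhF, hx⟩)
    rw [Finset.sdiff_eq_empty_iff_subset.2 hsub] at hw
    exact Finset.singleton_ne_empty w hw.symm

theorem card_inter_biUnion_le_card {edges : E → Finset V}
    (hlin : ∀ h h' : E, h ≠ h' → ((edges h) ∩ (edges h')).card ≤ 1)
    {F : Finset E} {h : E} (hhF : h ∉ F) :
    (edges h ∩ F.biUnion edges).card ≤ F.card := by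
  calc (edges h ∩ F.biUnion edges).card
      = (F.biUnion fun f => edges h ∩ edges f).card := by rw [Finset.inter_biUnion]
    _ ≤ ∑ f ∈ F, (edges h ∩ edges f).card := Finset.card_biUnion_le
    _ ≤ ∑ _f ∈ F, 1 :=
        Finset.sum_le_sum fun f hf => hlin h f (ne_of_mem_of_not_mem hf hhF).symm
    _ = F.card := by rw [Finset.card_eq_sum_ones]

theorem IsLazyBurningSet.exists_sum_le_card_inter_biUnion [Fintype E] {edges : E → Finset V}
    {B : Finset V} (hB : IsLazyBurningSet edges ↑B) {r : ℕ}
    (hlin : ∀ h h' : E, h ≠ h' → ((edges h) ∩ (edges h')).card ≤ 1)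
    (hr : ∀ h : E, r ≤ (edges h).card) {k : ℕ} (hk : k ≤ Fintype.card E) :
    ∃ F : Finset E, F.card = k ∧
      ∑ t ∈ Finset.range k, (r - 1 - t) ≤ (B ∩ F.biUnion edges).card := by
  induction k with
  | zero => exact ⟨∅, rfl, by simp⟩
  | succ k ih =>
    obtain ⟨F, hFk, hsum⟩ := ih (Nat.le_of_succ_le hk)
    subst hFk
    obtain ⟨h, hhF, hfree⟩ := hB.exists_edge_card_sdiff_le_one hk
    set W := F.biUnion edges
    have hcover : edges h ⊆ edges h \ (B ∪ W) ∪ (edges h ∩ B) \ W ∪ edges h ∩ W := by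
      intro x hx
      by_cases hxW : x ∈ W <;> by_cases hxB : x ∈ B <;> simp [hx, hxW, hxB]
    have hnew : r - 1 - F.card ≤ ((edges h ∩ B) \ W).card := by
      have hsize := (hr h).trans ((Finset.card_le_card hcover).trans (Finset.card_union_le _ _))
      have hparts := Finset.card_union_le (edges h \ (B ∪ W)) ((edges h ∩ B) \ W)
      have hold : (edges h ∩ W).card ≤ F.card := card_inter_biUnion_le_card hlin hhF
      omega
    have hsplit : B ∩ (insert h F).biUnion edges = (B ∩ W) ∪ ((edges h ∩ B) \ W) := by
      ext x
      simp only [Finset.biUnion_insert, Finset.mem_inter, Finset.mem_union, Finset.mem_sdiff]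
      by_cases x ∈ W <;> tauto
    refine ⟨insert h F, Finset.card_insert_of_notMem hhF, ?_⟩
    rw [Finset.sum_range_succ, hsplit, Finset.card_union_of_disjoint
      (Finset.disjoint_left.2 fun x hx hx' => (Finset.mem_sdiff.1 hx').2 (Finset.mem_inter.1 hx).2)]
    omega

theorem sum_range_sub_one_sub_eq_choose_two (r : ℕ) :
    ∑ t ∈ Finset.range r, (r - 1 - t) = r.choose 2 := by
  rw [Nat.choose_two_right, ← Finset.sum_range_id]
  exact Finset.sum_range_reflect (fun t => t) r

theorem IsLazyBurningSet.choose_two_le_card [Fintype E] {edges : E → Finset V}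
    {B : Finset V} (hB : IsLazyBurningSet edges ↑B) {r : ℕ}
    (hlin : ∀ h h' : E, h ≠ h' → ((edges h) ∩ (edges h')).card ≤ 1)
    (hr : ∀ h : E, r ≤ (edges h).card) (hE : r ≤ Fintype.card E) :
    r.choose 2 ≤ B.card := by
  obtain ⟨F, -, hsum⟩ := hB.exists_sum_le_card_inter_biUnion hlin hr hE
  rw [sum_range_sub_one_sub_eq_choose_two] at hsum
  exact hsum.trans (Finset.card_le_card Finset.inter_subset_left)

end LazyBurning

theorem stmt7_general {V E : Type*} [Fintype V] [Fintype E] (edges : E → Finset V) (r : ℕ)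
    (hlin : ∀ h h' : E, h ≠ h' → ((edges h) ∩ (edges h')).card ≤ 1)
    (hr : ∀ h : E, r ≤ (edges h).card)
    (hE : r ≤ Fintype.card E) :
    r.choose 2 ≤ lazyBurningNumber edges := by
  apply le_csInf
  · exact ⟨_, Finset.univ, rfl, fun v => Burns.init v (Finset.mem_coe.2 (Finset.mem_univ v))⟩
  · rintro n ⟨B, rfl, hB⟩
    exact hB.choose_two_le_card hlin hr hE

theorem stmt7 {V E : Type*} [Fintype V] [Fintype E] (edges : E → Finset V) (r : ℕ)
    (hinj : Function.Injective edges)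
    (hlin : ∀ h h' : E, h ≠ h' → ((edges h) ∩ (edges h')).card ≤ 1)
    (hr : ∀ h : E, r ≤ (edges h).card)
    (hE : r ≤ Fintype.card E) :
    r.choose 2 ≤ lazyBurningNumber edges :=
  stmt7_general edges r hlin hr hE
end

section
/- Let G be a graph and B \subseteq V(G). If B is a zero forcing set for G, then B is a lazy burning set for the closed neighborhood hypergraph \mathcal{N}[G]; in particular, b_L(\mathcal{N}[G]) \le z(G). Moreover the converse fails: for the star K_{1,j} with j \ge 3, b_L(\mathcal{N}[K_{1,j}]) = 1 while z(K_{1,j}) = j - 1. -/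
open scoped Classical

/-!
A zero forcing step, in which a black vertex `u` forces its unique white neighbour `v`, is a lazy
burning step in the hyperedge `N[u]`: every vertex of `N[u]` other than `v` is already black. Hence
every zero forcing set is a lazy burning set of `𝒩[G]`.

In the star `K_{1,j}` every leaf `ℓ` has `N[ℓ] = {ℓ, 0}`, so the centre alone burns everything,
while no hyperedge is a singleton, so the empty set burns nothing. On the other hand two white
leaves are twins, so no vertex can ever force either of them: a zero forcing set must contain all
leaves but one, and all leaves but one do force the star.
-/

local notation "𝒩[" G "]" => fun v => insert v (SimpleGraph.neighborFinset G v)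

section Burning

variable {V E : Type*} {edges : E → Finset V}

theorem not_burns_empty (hedges : ∀ e, 1 < (edges e).card) {v : V} : ¬ Burns edges ∅ v := by
  intro hv
  induction hv with
  | init v hv => exact hv
  | spread e v hve _ ih =>
    obtain ⟨u, hue, huv⟩ := Finset.exists_mem_ne (hedges e) v
    exact ih u hue huv

variable [Fintype V]

theorem lazyBurningNumber_le {B : Finset V} (hB : IsLazyBurningSet edges B) :
    lazyBurningNumber edges ≤ B.card :=
  Nat.sInf_le ⟨B, rfl, hB⟩

theorem exists_isLazyBurningSet_card_eq :
    ∃ B : Finset V, B.card = lazyBurningNumber edges ∧ IsLazyBurningSet edges B :=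
  Nat.sInf_mem (s := {n | ∃ B : Finset V, B.card = n ∧ IsLazyBurningSet edges B})
    ⟨_, Finset.univ, rfl, fun v => Burns.init v (by simp)⟩

theorem lazyBurningNumber_pos [Nonempty V] (hedges : ∀ e, 1 < (edges e).card) :
    0 < lazyBurningNumber edges := by
  obtain ⟨B, hcard, hB⟩ := exists_isLazyBurningSet_card_eq (edges := edges)
  refine Nat.pos_of_ne_zero fun h0 => ?_
  rw [h0, Finset.card_eq_zero] at hcard
  subst hcard
  exact not_burns_empty hedges (by simpa using hB (Classical.arbitrary V))

end Burning

section ZeroForcing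

variable {α : Type*} {G : SimpleGraph α} {B : Set α}

theorem IsZeroForcingSet.isLazyBurningSet [DecidableEq α] [G.LocallyFinite]
    (hB : IsZeroForcingSet G B) : IsLazyBurningSet 𝒩[G] B := by
  intro v
  induction hB v with
  | init v hv => exact Burns.init v hv
  | force u v _ hadj _ ihu ihw =>
    refine Burns.spread u v (by simp [hadj]) fun w hw hwv => ?_
    rcases Finset.mem_insert.mp hw with rfl | hw
    · exact ihu
    · exact ihw w ((G.mem_neighborFinset u w).mp hw) hwv

/-- Two white twins block each other: whichever is forced first, its forcer still sees the other
one as a second white neighbour. -/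
theorem ZFClosure.ne_of_twins {a b : α} (hab : a ≠ b) (htwin : ∀ u, G.Adj u a ↔ G.Adj u b)
    (ha : a ∉ B) (hb : b ∉ B) {x : α} (hx : ZFClosure G B x) : x ≠ a ∧ x ≠ b := by
  induction hx with
  | init v hv => exact ⟨fun h => ha (h ▸ hv), fun h => hb (h ▸ hv)⟩
  | force u v _ huv _ _ ihw =>
    constructor
    · rintro rfl
      exact (ihw b ((htwin u).mp huv) hab.symm).2 rfl
    · rintro rfl
      exact (ihw a ((htwin u).mpr huv) hab).1 rfl

theorem IsZeroForcingSet.mem_or_mem_of_twins (hB : IsZeroForcingSet G B) {a b : α}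
    (hab : a ≠ b) (htwin : ∀ u, G.Adj u a ↔ G.Adj u b) : a ∈ B ∨ b ∈ B := by
  by_contra! h
  exact (ZFClosure.ne_of_twins hab htwin h.1 h.2 (hB a)).1 rfl

variable [Fintype α]

theorem zeroForcingNumber_le {B : Finset α} (hB : IsZeroForcingSet G B) :
    zeroForcingNumber G ≤ B.card :=
  Nat.sInf_le ⟨B, rfl, hB⟩

theorem exists_isZeroForcingSet_card_eq :
    ∃ B : Finset α, B.card = zeroForcingNumber G ∧ IsZeroForcingSet G B :=
  Nat.sInf_mem (s := {n | ∃ B : Finset α, B.card = n ∧ IsZeroForcingSet G B})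
    ⟨_, Finset.univ, rfl, fun v => ZFClosure.init v (by simp)⟩

theorem lazyBurningNumber_closedNbhd_le_zeroForcingNumber [DecidableEq α] [DecidableRel G.Adj] :
    lazyBurningNumber 𝒩[G] ≤ zeroForcingNumber G := by
  obtain ⟨B, hcard, hB⟩ := exists_isZeroForcingSet_card_eq (G := G)
  exact hcard ▸ lazyBurningNumber_le hB.isLazyBurningSet

end ZeroForcing

section Star

variable {j : ℕ}

theorem starGraph_adj_iff_of_ne_zero {a : Fin (j + 1)} (ha : a ≠ 0) (u : Fin (j + 1)) :
    (starGraph j).Adj u a ↔ u = 0 :=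
  ⟨fun h => h.2.resolve_right ha, fun h => ⟨h ▸ ha.symm, Or.inl h⟩⟩

theorem starGraph_one_lt_card_closedNbhd (hj : 1 ≤ j) (v : Fin (j + 1)) :
    1 < (insert v ((starGraph j).neighborFinset v)).card := by
  obtain ⟨w, hvw⟩ : ∃ w, (starGraph j).Adj v w := by
    by_cases hv : v = 0
    · refine ⟨⟨1, by omega⟩, ?_, Or.inl hv⟩
      simp [hv, Fin.ext_iff]
    · exact ⟨0, hv, Or.inr rfl⟩
  exact Finset.one_lt_card.mpr ⟨v, by simp, w, by simp [hvw], hvw.ne⟩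

theorem lazyBurningNumber_starGraph (hj : 1 ≤ j) :
    lazyBurningNumber 𝒩[starGraph j] = 1 := by
  have hcentre : IsLazyBurningSet 𝒩[starGraph j] (({0} : Finset (Fin (j + 1))) : Set _) := by
    intro v
    by_cases hv : v = 0
    · exact Burns.init v (by simp [hv])
    refine Burns.spread v v (Finset.mem_insert_self v _) fun u hu huv => ?_
    have hvu : (starGraph j).Adj v u := by simpa [huv] using hu
    exact Burns.init u (by simpa using ((starGraph_adj_iff_of_ne_zero hv u).mp hvu.symm))
  refine le_antisymm ?_ (lazyBurningNumber_pos (starGraph_one_lt_card_closedNbhd hj))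
  simpa using lazyBurningNumber_le hcentre

theorem starGraph_isZeroForcingSet (hj : 2 ≤ j) {o : Fin (j + 1)} (ho : o ≠ 0) :
    IsZeroForcingSet (starGraph j) ↑(Finset.univ \ {0, o}) := by
  have hleaf {v : Fin (j + 1)} (hv0 : v ≠ 0) (hvo : v ≠ o) :
      ZFClosure (starGraph j) ↑(Finset.univ \ {0, o}) v :=
    ZFClosure.init v (by simp [hv0, hvo])
  obtain ⟨t, ht0, hto⟩ : ∃ t : Fin (j + 1), t ≠ 0 ∧ t ≠ o := by
    by_cases ho1 : o = ⟨1, by omega⟩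
    · exact ⟨⟨2, by omega⟩, by simp [Fin.ext_iff], by simp [ho1, Fin.ext_iff]⟩
    · exact ⟨⟨1, by omega⟩, by simp [Fin.ext_iff], Ne.symm ho1⟩
  have hcentre : ZFClosure (starGraph j) ↑(Finset.univ \ {0, o}) 0 :=
    ZFClosure.force t 0 (hleaf ht0 hto) ⟨ht0, Or.inr rfl⟩ fun w htw hw0 =>
      absurd ((starGraph_adj_iff_of_ne_zero ht0 w).mp htw.symm) hw0
  intro v
  by_cases hv0 : v = 0
  · exact hv0 ▸ hcentre
  by_cases hvo : v = o
  · exact hvo ▸ ZFClosure.force 0 o hcentre ⟨ho.symm, Or.inl rfl⟩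
      fun w h0w hwo => hleaf h0w.ne.symm hwo
  · exact hleaf hv0 hvo

theorem IsZeroForcingSet.starGraph_le_card {B : Finset (Fin (j + 1))}
    (hB : IsZeroForcingSet (starGraph j) B) : j - 1 ≤ B.card := by
  have hwhite : (Finset.univ.erase 0 \ B).card ≤ 1 := by
    refine Finset.card_le_one.mpr fun a ha b hb => by_contra fun hab => ?_
    simp only [Finset.mem_sdiff, Finset.mem_erase, Finset.mem_univ, and_true] at ha hb
    have htwin (u : Fin (j + 1)) : (starGraph j).Adj u a ↔ (starGraph j).Adj u b := by
      rw [starGraph_adj_iff_of_ne_zero ha.1, starGraph_adj_iff_of_ne_zero hb.1]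
    rcases hB.mem_or_mem_of_twins hab htwin with h | h
    · exact ha.2 h
    · exact hb.2 h
  have := Finset.le_card_sdiff B (Finset.univ.erase 0)
  simp only [Finset.mem_univ, Finset.card_erase_of_mem, Finset.card_univ, Fintype.card_fin] at this
  omega

theorem zeroForcingNumber_starGraph (hj : 2 ≤ j) : zeroForcingNumber (starGraph j) = j - 1 := by
  obtain ⟨B, hcard, hB⟩ := exists_isZeroForcingSet_card_eq (G := starGraph j)
  refine le_antisymm ?_ (hcard ▸ hB.starGraph_le_card)
  have ho : (⟨1, by omega⟩ : Fin (j + 1)) ≠ 0 := by simp [Fin.ext_iff]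
  refine (zeroForcingNumber_le (starGraph_isZeroForcingSet hj ho)).trans_eq ?_
  rw [Finset.card_sdiff_of_subset (Finset.subset_univ _), Finset.card_pair ho.symm]
  simp

end Star

theorem stmt19 {α : Type*} [Fintype α] [DecidableEq α] (G : SimpleGraph α)
    [DecidableRel G.Adj] (B : Set α) (j : ℕ) (hj : 3 ≤ j) :
    (IsZeroForcingSet G B → IsLazyBurningSet (fun v => insert v (G.neighborFinset v)) B) ∧
    lazyBurningNumber (fun v => insert v (G.neighborFinset v)) ≤ zeroForcingNumber G ∧
    lazyBurningNumber (fun v : Fin (j + 1) => insert v ((starGraph j).neighborFinset v)) = 1 ∧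
    zeroForcingNumber (starGraph j) = j - 1 :=
  ⟨IsZeroForcingSet.isLazyBurningSet, lazyBurningNumber_closedNbhd_le_zeroForcingNumber,
    lazyBurningNumber_starGraph (by omega), zeroForcingNumber_starGraph (by omega)⟩
end
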